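/- arXiv:1801.02697 — 2 statements merged into one kernel-verified Lean document; each statement's English description precedes it below -/
import Mathlib

section
/- Strips estimate: let a ≥ 3 and let x₁,…,x_a be points in a closed axis-parallel square R of side length b > 0 such that no two of the points share the same x-coordinate or the same y-coordinate. Then the minimum spanning tree length satisfies MST(x₁,…,x_a) ≤ 3·b·√a. -/
open MeasureTheory ProbabilityTheory Filter Set

noncomputable section

/-- Euclidean distance between two points of the plane. -/
def eudist (p q : ℝ × ℝ) : ℝ := Real.sqrt ((p.1 - q.1) ^ 2 + (p.2 - q.2) ^ 2)

lemma eudist_comm (p q : ℝ × ℝ) : eudist p q = eudist q p := by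
  unfold eudist
  rw [show (p.1 - q.1) ^ 2 = (q.1 - p.1) ^ 2 by ring,
    show (p.2 - q.2) ^ 2 = (q.2 - p.2) ^ 2 by ring]

/-- Total Euclidean length of the edges of the graph `T` drawn on the points `x`. -/
def treeLength {V : Type*} [Finite V] (x : V → ℝ × ℝ) (T : SimpleGraph V) : ℝ :=
  ∑ e ∈ T.edgeSet.toFinite.toFinset,
    Sym2.lift ⟨fun i j => eudist (x i) (x j), fun _ _ => eudist_comm _ _⟩ e

/-- Length of a minimum spanning tree on the (finitely many) points `x`:
the minimum of the total edge length over all trees on the points. -/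
def mstLength {V : Type*} [Finite V] (x : V → ℝ × ℝ) : ℝ :=
  sInf {L | ∃ T : SimpleGraph V, T.IsTree ∧ L = treeLength x T}

/-- The unit square `S`. -/
def unitSquare : Set (ℝ × ℝ) := Set.Icc (0 : ℝ) 1 ×ˢ Set.Icc (0 : ℝ) 1

/-!
Cut the square into `k` horizontal strips of height `b / k` and visit the points strip by strip,
from left to right inside each strip. Measuring each step in the ℓ¹ norm, the horizontal moves
inside one strip add up to at most `b`, each change of strip costs at most `2 b` horizontally,
and each step rises at most one strip height more than the strips it climbs; so each step costs at
most `b / k` plus the increase of the potential `p.1 + (2 b + b / k) · strip(p)`. The resulting path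
is a spanning tree of length at most `b (2 k + (a - 2) / k)`; taking for `k` the integer nearest
to `√((a - 2) / 2)` makes this at most `3 b √a`.
-/

open SimpleGraph

lemma treeLength_nonneg {V : Type*} [Finite V] (x : V → ℝ × ℝ) (T : SimpleGraph V) :
    0 ≤ treeLength x T :=
  Finset.sum_nonneg fun e _ => Sym2.ind (fun _ _ => Real.sqrt_nonneg _) e

lemma mstLength_le_treeLength {V : Type*} [Finite V] (x : V → ℝ × ℝ) {T : SimpleGraph V}
    (hT : T.IsTree) : mstLength x ≤ treeLength x T :=
  csInf_le ⟨0, by rintro _ ⟨T', -, rfl⟩; exact treeLength_nonneg x T'⟩ ⟨T, hT, rfl⟩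

lemma eudist_le_abs_add_abs (p q : ℝ × ℝ) : eudist p q ≤ |q.1 - p.1| + |q.2 - p.2| := by
  rw [eudist, Real.sqrt_le_left (by positivity)]
  nlinarith [sq_abs (q.1 - p.1), sq_abs (q.2 - p.2),
    mul_nonneg (abs_nonneg (q.1 - p.1)) (abs_nonneg (q.2 - p.2))]

theorem Fin.sum_univ_succ_sub_castSucc {M : Type*} [AddCommGroup M] {n : ℕ}
    (f : Fin (n + 1) → M) :
    ∑ i : Fin n, (f i.succ - f i.castSucc) = f (Fin.last n) - f 0 := by
  induction n with
  | zero => simp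
  | succ n ih =>
    rw [Fin.sum_univ_castSucc]
    simp only [Fin.succ_castSucc]
    rw [ih (fun i => f i.castSucc)]
    simp

theorem edgeSet_pathGraph_succ (n : ℕ) :
    (pathGraph (n + 1)).edgeSet = Set.range fun i : Fin n => s(i.castSucc, i.succ) := by
  ext e
  induction e using Sym2.ind with
  | _ u v =>
    simp only [mem_edgeSet, pathGraph_adj, Set.mem_range, Sym2.eq_iff]
    constructor
    · rintro (h | h)
      · exact ⟨⟨u, by omega⟩, Or.inl ⟨rfl, Fin.ext (by simp; omega)⟩⟩
      · exact ⟨⟨v, by omega⟩, Or.inr ⟨rfl, Fin.ext (by simp; omega)⟩⟩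
    · rintro ⟨i, ⟨rfl, rfl⟩ | ⟨rfl, rfl⟩⟩ <;> simp

theorem injective_sym2_castSucc_succ (n : ℕ) :
    Function.Injective fun i : Fin n => s(i.castSucc, i.succ) := by
  intro i j hij
  simp only [Sym2.eq_iff, Fin.ext_iff, Fin.val_castSucc, Fin.val_succ] at hij
  exact Fin.ext (by omega)

theorem isTree_pathGraph_succ (n : ℕ) : (pathGraph (n + 1)).IsTree := by
  rw [isTree_iff_connected_and_card, edgeSet_pathGraph_succ,
    Nat.card_range_of_injective (injective_sym2_castSucc_succ n)]
  exact ⟨pathGraph_connected n, by simp⟩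

def pathThrough {V : Type*} {n : ℕ} (σ : Fin (n + 1) ≃ V) : SimpleGraph V :=
  (pathGraph (n + 1)).map σ

theorem pathThrough_isTree {V : Type*} {n : ℕ} (σ : Fin (n + 1) ≃ V) : (pathThrough σ).IsTree :=
  (Iso.map σ _).isTree_iff.mp (isTree_pathGraph_succ n)

theorem treeLength_pathThrough {V : Type*} [Finite V] {n : ℕ} (σ : Fin (n + 1) ≃ V)
    (x : V → ℝ × ℝ) :
    treeLength x (pathThrough σ) = ∑ i : Fin n, eudist (x (σ i.castSucc)) (x (σ i.succ)) := by
  classical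
  have hedges : (pathThrough σ).edgeSet.toFinite.toFinset =
      Finset.univ.image (Sym2.map σ ∘ fun i : Fin n => s(i.castSucc, i.succ)) := by
    apply Finset.coe_injective
    rw [Set.Finite.coe_toFinset, Finset.coe_image, Finset.coe_univ, Set.image_univ,
      Set.range_comp, ← edgeSet_pathGraph_succ]
    exact edgeSet_map σ.toEmbedding _
  rw [treeLength, hedges, Finset.sum_image fun i _ j _ h =>
    (Sym2.map.injective σ.injective).comp (injective_sym2_castSucc_succ n) h]
  rfl

def square (c : ℝ × ℝ) (b : ℝ) : Set (ℝ × ℝ) := Icc c.1 (c.1 + b) ×ˢ Icc c.2 (c.2 + b)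

section Strips

variable (c : ℝ × ℝ) (b : ℝ) (k : ℕ)

-- The `min` puts the top edge of the square into the last strip.
def stripIndex (p : ℝ × ℝ) : ℕ := min (k - 1) ⌊(p.2 - c.2) / (b / k)⌋₊

def stripKey (p : ℝ × ℝ) : ℕ ×ₗ ℝ := toLex (stripIndex c b k p, p.1)

def stripPotential (p : ℝ × ℝ) : ℝ := p.1 + (2 * b + b / k) * stripIndex c b k p

variable {c b k}

lemma stripIndex_le_sub_one (hk : 0 < k) (p : ℝ × ℝ) : (stripIndex c b k p : ℝ) ≤ k - 1 := by
  have := Nat.cast_le (α := ℝ).mpr (min_le_left (k - 1) ⌊(p.2 - c.2) / (b / k)⌋₊)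
  rwa [Nat.cast_sub hk, Nat.cast_one] at this

lemma stripIndex_mul_le (hb : 0 < b) (hk : 0 < k) {p : ℝ × ℝ} (hp : c.2 ≤ p.2) :
    stripIndex c b k p * (b / k) ≤ p.2 - c.2 := by
  have hh : 0 < b / k := by positivity
  calc stripIndex c b k p * (b / k) ≤ ⌊(p.2 - c.2) / (b / k)⌋₊ * (b / k) := by
        gcongr; exact min_le_right _ _
    _ ≤ p.2 - c.2 := (le_div_iff₀ hh).mp (Nat.floor_le (div_nonneg (by linarith) hh.le))

lemma sub_le_stripIndex_add_one_mul (hb : 0 < b) (hk : 0 < k) {p : ℝ × ℝ}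
    (hp : p.2 ≤ c.2 + b) :
    p.2 - c.2 ≤ (stripIndex c b k p + 1) * (b / k) := by
  have hh : 0 < b / k := by positivity
  rcases le_total ⌊(p.2 - c.2) / (b / k)⌋₊ (k - 1) with hfloor | hfloor
  · rw [stripIndex, min_eq_right hfloor, ← div_le_iff₀ hh]
    exact (Nat.lt_floor_add_one _).le
  · rw [stripIndex, min_eq_left hfloor, Nat.cast_sub hk, Nat.cast_one, sub_add_cancel,
      mul_div_cancel₀ _ (by positivity)]
    linarith

lemma abs_snd_sub_le (hb : 0 < b) (hk : 0 < k) {p q : ℝ × ℝ} (hp : p ∈ square c b)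
    (hq : q ∈ square c b) (hpq : stripIndex c b k p ≤ stripIndex c b k q) :
    |q.2 - p.2| ≤ (stripIndex c b k q - stripIndex c b k p + 1) * (b / k) := by
  have hpq' : (stripIndex c b k p : ℝ) ≤ stripIndex c b k q := by exact_mod_cast hpq
  have := stripIndex_mul_le hb hk hp.2.1
  have := stripIndex_mul_le hb hk hq.2.1
  have := sub_le_stripIndex_add_one_mul hb hk hp.2.2
  have := sub_le_stripIndex_add_one_mul hb hk hq.2.2
  have : 0 ≤ (stripIndex c b k q - stripIndex c b k p : ℝ) * (b / k) :=
    mul_nonneg (by linarith) (by positivity)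
  rw [abs_le]
  constructor <;> nlinarith

lemma abs_fst_sub_le {p q : ℝ × ℝ} (hp : p ∈ square c b) (hq : q ∈ square c b)
    (hpq : stripKey c b k p ≤ stripKey c b k q) :
    |q.1 - p.1| ≤ q.1 - p.1 + 2 * b * (stripIndex c b k q - stripIndex c b k p) := by
  obtain hlt | ⟨heq, hle⟩ := Prod.Lex.toLex_le_toLex.mp hpq
  · have : (stripIndex c b k p : ℝ) + 1 ≤ stripIndex c b k q := by exact_mod_cast hlt
    have := hp.1.1; have := hp.1.2; have := hq.1.1; have := hq.1.2
    rw [abs_le]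
    constructor <;> nlinarith
  · dsimp only at heq hle
    simp only [heq, sub_self, mul_zero, add_zero]
    exact (abs_of_nonneg (sub_nonneg.mpr hle)).le

lemma eudist_le_stripPotential_sub_add (hb : 0 < b) (hk : 0 < k) {p q : ℝ × ℝ}
    (hp : p ∈ square c b) (hq : q ∈ square c b) (hpq : stripKey c b k p ≤ stripKey c b k q) :
    eudist p q ≤ stripPotential c b k q - stripPotential c b k p + b / k := by
  have hstrip : stripIndex c b k p ≤ stripIndex c b k q := (Prod.Lex.monotone_fst _ _ hpq)
  have := eudist_le_abs_add_abs p q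
  have := abs_fst_sub_le hp hq hpq
  have := abs_snd_sub_le hb hk hp hq hstrip
  simp only [stripPotential]
  linarith

lemma stripPotential_sub_le (hk : 0 < k) {p q : ℝ × ℝ} (hp : p ∈ square c b)
    (hq : q ∈ square c b) :
    stripPotential c b k q - stripPotential c b k p ≤ b + (2 * b + b / k) * (k - 1) := by
  have hb : 0 ≤ b := by linarith [hp.1.1, hp.1.2]
  have hstrips : (stripIndex c b k q : ℝ) - stripIndex c b k p ≤ k - 1 := by
    linarith [stripIndex_le_sub_one (c := c) (b := b) hk q,
      Nat.cast_nonneg (α := ℝ) (stripIndex c b k p)]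
  have := mul_le_mul_of_nonneg_left hstrips (by positivity : 0 ≤ 2 * b + b / k)
  simp only [stripPotential]
  linarith [hp.1.1, hq.1.2]

theorem sum_eudist_le_of_monotone_stripKey (hb : 0 < b) (hk : 0 < k) {n : ℕ}
    {w : Fin (n + 1) → ℝ × ℝ} (hw : ∀ i, w i ∈ square c b)
    (hmono : Monotone (stripKey c b k ∘ w)) :
    ∑ i : Fin n, eudist (w i.castSucc) (w i.succ) ≤ b * (2 * k + (n - 1) / k) := by
  calc ∑ i : Fin n, eudist (w i.castSucc) (w i.succ)
      ≤ ∑ i : Fin n, (stripPotential c b k (w i.succ) - stripPotential c b k (w i.castSucc)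
          + b / k) :=
        Finset.sum_le_sum fun i _ => eudist_le_stripPotential_sub_add hb hk (hw _) (hw _)
          (hmono (Fin.castSucc_le_succ i))
    _ = stripPotential c b k (w (Fin.last n)) - stripPotential c b k (w 0) + n * (b / k) := by
        rw [Finset.sum_add_distrib,
          Fin.sum_univ_succ_sub_castSucc fun i => stripPotential c b k (w i)]
        simp
    _ ≤ b + (2 * b + b / k) * (k - 1) + n * (b / k) := by
        gcongr; exact stripPotential_sub_le hk (hw _) (hw _)
    _ = b * (2 * k + (n - 1) / k) := by
        field_simp
        ring

end Strips

lemma exists_nat_two_mul_add_div_le (m : ℝ) (hm : 1 ≤ m) :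
    ∃ k : ℕ, 0 < k ∧ 2 * k + m / k ≤ 3 * √(m + 2) := by
  set r := √(m / 2)
  have hr : r ^ 2 = m / 2 := Real.sq_sqrt (by linarith)
  have hr0 : 0 ≤ r := Real.sqrt_nonneg _
  have hr_half : 1 / 2 < r := by nlinarith
  refine ⟨⌊r + 1 / 2⌋₊, Nat.floor_pos.mpr (by linarith), ?_⟩
  have hK_le : (⌊r + 1 / 2⌋₊ : ℝ) ≤ r + 1 / 2 := Nat.floor_le (by linarith)
  have hK_gt : r - 1 / 2 < ⌊r + 1 / 2⌋₊ := by have := Nat.lt_floor_add_one (r + 1 / 2); linarith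
  have hK : (1 : ℝ) ≤ ⌊r + 1 / 2⌋₊ := by exact_mod_cast Nat.floor_pos.mpr (by linarith)
  generalize (⌊r + 1 / 2⌋₊ : ℝ) = K at *
  have hsqrt : 4 * r + 1 / 2 ≤ 3 * √(m + 2) := by
    nlinarith [Real.sq_sqrt (by linarith : 0 ≤ m + 2), Real.sqrt_nonneg (m + 2), sq_nonneg (r - 1)]
  calc 2 * K + m / K = (2 * (K - r) ^ 2 + 4 * r * K) / K := by
        field_simp; linear_combination (-2) * hr
    _ ≤ (1 / 2 + 4 * r * K) / K := by gcongr; nlinarith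
    _ = 4 * r + 1 / (2 * K) := by field_simp; ring
    _ ≤ 4 * r + 1 / 2 := by gcongr; linarith
    _ ≤ 3 * √(m + 2) := by linarith

theorem strips_estimate_general (a : ℕ) (ha : 3 ≤ a) (b : ℝ) (hb : 0 < b) (c : ℝ × ℝ)
    (x : Fin a → ℝ × ℝ)
    (hx : ∀ i, x i ∈ Set.Icc c.1 (c.1 + b) ×ˢ Set.Icc c.2 (c.2 + b)) :
    mstLength x ≤ 3 * b * Real.sqrt a := by
  obtain ⟨n, rfl⟩ : ∃ n, a = n + 1 := ⟨a - 1, by omega⟩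
  obtain ⟨k, hk, hk_bound⟩ := exists_nat_two_mul_add_div_le ((n : ℝ) - 1) (by
    have : (2 : ℝ) ≤ n := by exact_mod_cast (by omega : 2 ≤ n)
    linarith)
  obtain ⟨τ, hτ⟩ : ∃ τ : Equiv.Perm (Fin (n + 1)), Monotone ((stripKey c b k ∘ x) ∘ τ) :=
    ⟨_, Tuple.monotone_sort (stripKey c b k ∘ x)⟩
  calc mstLength x ≤ treeLength x (pathThrough τ) :=
        mstLength_le_treeLength x (pathThrough_isTree τ)
    _ = ∑ i : Fin n, eudist (x (τ i.castSucc)) (x (τ i.succ)) := treeLength_pathThrough τ x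
    _ ≤ b * (2 * k + (n - 1) / k) :=
        sum_eudist_le_of_monotone_stripKey (w := x ∘ τ) hb hk (fun i => hx _) hτ
    _ ≤ b * (3 * √(n - 1 + 2)) := by gcongr
    _ = 3 * b * √((n + 1 : ℕ) : ℝ) := by push_cast; ring_nf

/-- The strips estimate: if `a ≥ 3` points lie in an axis-parallel square of side
length `b`, no two sharing an `x`- or `y`-coordinate, then the MST length is at most
`3 b √a`. -/
theorem strips_estimate (a : ℕ) (ha : 3 ≤ a) (b : ℝ) (hb : 0 < b) (c : ℝ × ℝ)
    (x : Fin a → ℝ × ℝ)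
    (hx : ∀ i, x i ∈ Set.Icc c.1 (c.1 + b) ×ˢ Set.Icc c.2 (c.2 + b))
    (hcoord : ∀ i j, i ≠ j → (x i).1 ≠ (x j).1 ∧ (x i).2 ≠ (x j).2) :
    mstLength x ≤ 3 * b * Real.sqrt a :=
  strips_estimate_general a ha b hb c x hx
end
end

section
/- Binomial–Poisson comparison: fix constants 0 < η₁ ≤ η₂. There is a constant C > 0 depending only on η₁, η₂ such that for all n ≥ 3, all integers N with √n ≤ N ≤ n, every p with η₁/N ≤ p ≤ η₂/N, and every integer k with η₁·n/(2N) ≤ k ≤ 2·η₂·n/N, the binomial probability B(k;n,p) = C(n,k)·p^k·(1−p)^{n−k} and the Poisson probability Poi(k;np) = e^{−np}·(np)^k/k! satisfy Poi(k;np)·(1 − C·n/N²) ≤ B(k;n,p) ≤ Poi(k;np)·(1 + C·n/N²). -/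
open MeasureTheory ProbabilityTheory Filter Set

noncomputable section

/-- The Poisson probability mass function `Poi(k;λ)`. -/
def poiPMF (lam : ℝ) (k : ℕ) : ℝ := Real.exp (-lam) * lam ^ k / k.factorial

/-- The binomial probability mass function `B(k;n,p)`. -/
def binPMF (n k : ℕ) (p : ℝ) : ℝ := (n.choose k : ℝ) * p ^ k * (1 - p) ^ (n - k)

/-- The multinomial probability `B(k₁,k₂;n,p₁,p₂)`. -/
def multPMF (n k₁ k₂ : ℕ) (p₁ p₂ : ℝ) : ℝ :=
  ((n.factorial : ℝ) / (k₁.factorial * k₂.factorial * (n - k₁ - k₂).factorial)) *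
    p₁ ^ k₁ * p₂ ^ k₂ * (1 - p₁ - p₂) ^ (n - k₁ - k₂)

/-!
Factor `B(k;n,p) = Poi(k;np) · ((n)_k / n^k) · (1 - p)^(n-k) · e^(np)`. When `p ≤ 1/2` and
`2k ≤ n`, the elementary bounds `e^(-x-2x²) ≤ 1 - x ≤ e^(-x)` (the first for `x ≤ 1/2`) pin the
correction factor between `exp(-(2k²/n + 2np²))` and `exp(kp)`, and under the hypotheses
`k²/n`, `np²` and `kp` are all `O(n/N²)`; since `n/N² ≤ 1`, convexity of `exp` gives
`exp(c·n/N²) ≤ 1 + (e^c - 1)·n/N²`. Otherwise `N < 4η₂`, so `n ≤ N² < 16η₂²`: then `|B|` is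
bounded, `Poi(k;np)` is bounded below by a positive constant (both `np` and `k` range over
bounded sets, with `np ≥ η₁`), and `n/N²` is bounded below, so a large `C` absorbs everything.
-/

open Real

lemma exp_neg_sub_two_mul_sq_le_one_sub {x : ℝ} (hx₀ : 0 ≤ x) (hx : x ≤ 1 / 2) :
    exp (-x - 2 * x ^ 2) ≤ 1 - x := by
  have hexp := add_one_le_exp (x + 2 * x ^ 2)
  have hinv : exp (-x - 2 * x ^ 2) * exp (x + 2 * x ^ 2) = 1 := by rw [← exp_add]; simp
  -- `(1 - x) (1 + x + 2 x²) = 1 + x² (1 - 2 x) ≥ 1`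
  nlinarith [exp_pos (-x - 2 * x ^ 2), mul_nonneg (sq_nonneg x) (by linarith : 0 ≤ 1 - 2 * x)]

lemma exp_le_one_sub_pow {x : ℝ} (m : ℕ) (hx₀ : 0 ≤ x) (hx : x ≤ 1 / 2) :
    exp (-(m * x) - 2 * m * x ^ 2) ≤ (1 - x) ^ m :=
  calc exp (-(m * x) - 2 * m * x ^ 2) = exp (-x - 2 * x ^ 2) ^ m := by
        rw [← exp_nat_mul]; ring_nf
    _ ≤ (1 - x) ^ m :=
        pow_le_pow_left₀ (exp_pos _).le (exp_neg_sub_two_mul_sq_le_one_sub hx₀ hx) m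

lemma one_sub_pow_le_exp {x : ℝ} (m : ℕ) (hx : x ≤ 1) : (1 - x) ^ m ≤ exp (-(m * x)) :=
  calc (1 - x) ^ m ≤ exp (-x) ^ m := pow_le_pow_left₀ (by linarith) (one_sub_le_exp_neg x) m
    _ = exp (-(m * x)) := by rw [← exp_nat_mul]; ring_nf

lemma exp_mul_sub_one_le {t : ℝ} (x : ℝ) (ht₀ : 0 ≤ t) (ht₁ : t ≤ 1) :
    exp (t * x) - 1 ≤ t * (exp x - 1) := by
  have h := convexOn_exp.2 (mem_univ 0) (mem_univ x) (sub_nonneg.2 ht₁) ht₀ (by ring)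
  simp only [smul_eq_mul, mul_zero, zero_add, exp_zero, mul_one] at h
  linarith

lemma abs_sub_le_of_exp_neg_mul_le_of_le_exp_mul {a b c : ℝ} (hc : 0 ≤ c)
    (hlo : exp (-a) * c ≤ b) (hhi : b ≤ exp a * c) : |b - c| ≤ (exp a - 1) * c := by
  have hsum : 2 ≤ exp a + exp (-a) := by linarith [add_one_le_exp a, add_one_le_exp (-a)]
  rw [abs_sub_le_iff]
  constructor <;> nlinarith

lemma exp_le_descFactorial_div_pow {n k : ℕ} (hn : 0 < n) (hk : 2 * k ≤ n) :
    exp (-(2 * k ^ 2 / n)) ≤ n.descFactorial k / (n : ℝ) ^ k := by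
  have hnR : (0 : ℝ) < n := by exact_mod_cast hn
  have hkn : (k : ℝ) / n ≤ 1 / 2 := by
    have : (2 : ℝ) * k ≤ n := by exact_mod_cast hk
    rw [div_le_iff₀ hnR]; linarith
  calc exp (-(2 * k ^ 2 / n))
      ≤ exp (-(k * (k / n)) - 2 * k * (k / n) ^ 2) := by
        gcongr
        have : (k : ℝ) / n * (k * (k / n)) ≤ 1 / 2 * (k * (k / n)) := by gcongr
        field_simp at this ⊢
        nlinarith [sq_nonneg (k : ℝ)]
    _ ≤ (1 - k / n) ^ k := exp_le_one_sub_pow k (by positivity) hkn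
    _ = ((n - k : ℕ) : ℝ) ^ k / (n : ℝ) ^ k := by
        rw [Nat.cast_sub (by omega), ← div_pow, sub_div, div_self hnR.ne']
    _ ≤ n.descFactorial k / (n : ℝ) ^ k := by
        gcongr
        exact_mod_cast
          (Nat.pow_le_pow_left (by omega) k).trans (Nat.pow_sub_le_descFactorial n k)

lemma poiPMF_nonneg {lam : ℝ} (hlam : 0 ≤ lam) (k : ℕ) : 0 ≤ poiPMF lam k := by
  unfold poiPMF; positivity

lemma binPMF_eq_poiPMF_mul {n : ℕ} (hn : 0 < n) (k : ℕ) (p : ℝ) :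
    binPMF n k p =
      poiPMF (n * p) k * (n.descFactorial k / (n : ℝ) ^ k * (1 - p) ^ (n - k) * exp (n * p)) := by
  have hnR : (n : ℝ) ≠ 0 := by exact_mod_cast hn.ne'
  unfold binPMF poiPMF
  rw [Nat.descFactorial_eq_factorial_mul_choose, exp_neg]
  push_cast
  field_simp
  ring

lemma binPMF_le_exp_mul_poiPMF {n k : ℕ} (hn : 0 < n) (hk : k ≤ n) {p : ℝ} (hp₀ : 0 ≤ p)
    (hp₁ : p ≤ 1) : binPMF n k p ≤ exp (k * p) * poiPMF (n * p) k := by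
  rw [binPMF_eq_poiPMF_mul hn, mul_comm (exp _)]
  gcongr
  · exact poiPMF_nonneg (by positivity) k
  calc (n.descFactorial k / (n : ℝ) ^ k) * (1 - p) ^ (n - k) * exp (n * p)
      ≤ 1 * exp (-((n - k : ℕ) * p)) * exp (n * p) := by
        gcongr
        · rw [div_le_one (by positivity)]; exact_mod_cast Nat.descFactorial_le_pow n k
        · exact one_sub_pow_le_exp _ hp₁
    _ = exp (k * p) := by rw [one_mul, ← exp_add, Nat.cast_sub hk]; ring_nf

lemma exp_mul_poiPMF_le_binPMF {n k : ℕ} (hn : 0 < n) (hk : 2 * k ≤ n) {p : ℝ} (hp₀ : 0 ≤ p)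
    (hp : p ≤ 1 / 2) :
    exp (-(2 * k ^ 2 / n + 2 * n * p ^ 2)) * poiPMF (n * p) k ≤ binPMF n k p := by
  rw [binPMF_eq_poiPMF_mul hn, mul_comm (exp _)]
  gcongr
  · exact poiPMF_nonneg (by positivity) k
  calc exp (-(2 * k ^ 2 / n + 2 * n * p ^ 2))
      = exp (-(2 * k ^ 2 / n)) * exp (-(n * p) - 2 * n * p ^ 2) * exp (n * p) := by
        rw [← exp_add, ← exp_add]; ring_nf
    _ ≤ n.descFactorial k / (n : ℝ) ^ k * (1 - p) ^ n * exp (n * p) := by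
        gcongr
        · exact exp_le_descFactorial_div_pow hn hk
        · exact exp_le_one_sub_pow n hp₀ hp
    _ ≤ n.descFactorial k / (n : ℝ) ^ k * (1 - p) ^ (n - k) * exp (n * p) := by
        have : (1 - p) ^ n ≤ (1 - p) ^ (n - k) :=
          pow_le_pow_of_le_one (by linarith) (by linarith) (Nat.sub_le n k)
        exact mul_le_mul_of_nonneg_right (mul_le_mul_of_nonneg_left this (by positivity))
          (exp_pos _).le

lemma abs_binPMF_sub_poiPMF_le_of_le_half {η : ℝ} {n N k : ℕ} {p : ℝ} (hn : 0 < n)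
    (hnN : (n : ℝ) ≤ N ^ 2) (hp₀ : 0 ≤ p) (hp : p ≤ η / N) (hk : (k : ℝ) ≤ 2 * η * n / N)
    (hp₁ : p ≤ 1 / 2) (hkn : 2 * k ≤ n) :
    |binPMF n k p - poiPMF (n * p) k| ≤
      (exp (10 * η ^ 2) - 1) * n / N ^ 2 * poiPMF (n * p) k := by
  have hnR : (0 : ℝ) < n := by exact_mod_cast hn
  have hN : (0 : ℝ) < N := by by_contra! h; nlinarith [(N.cast_nonneg : (0 : ℝ) ≤ N)]
  set ε := (n : ℝ) / N ^ 2 with hε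
  have hε₀ : 0 ≤ ε := by positivity
  have hε₁ : ε ≤ 1 := (div_le_one (by positivity)).2 hnN
  have hkp : k * p ≤ 10 * η ^ 2 * ε :=
    calc (k : ℝ) * p ≤ (2 * η * n / N) * (η / N) :=
          mul_le_mul hk hp hp₀ (k.cast_nonneg.trans hk)
      _ = 2 * η ^ 2 * ε := by rw [hε]; field_simp
      _ ≤ 10 * η ^ 2 * ε := by gcongr; norm_num
  have hquad : 2 * k ^ 2 / n + 2 * n * p ^ 2 ≤ 10 * η ^ 2 * ε :=
    calc 2 * (k : ℝ) ^ 2 / n + 2 * n * p ^ 2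
        ≤ 2 * (2 * η * n / N) ^ 2 / n + 2 * n * (η / N) ^ 2 := by gcongr
      _ = 10 * η ^ 2 * ε := by rw [hε]; field_simp; ring
  have hP := poiPMF_nonneg (mul_nonneg hnR.le hp₀) k
  calc |binPMF n k p - poiPMF (n * p) k| ≤ (exp (10 * η ^ 2 * ε) - 1) * poiPMF (n * p) k :=
        abs_sub_le_of_exp_neg_mul_le_of_le_exp_mul hP
          ((mul_le_mul_of_nonneg_right (exp_le_exp.2 (neg_le_neg hquad)) hP).trans
            (exp_mul_poiPMF_le_binPMF hn hkn hp₀ hp₁))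
          ((binPMF_le_exp_mul_poiPMF hn (by omega) hp₀ (by linarith)).trans
            (mul_le_mul_of_nonneg_right (exp_le_exp.2 hkp) hP))
    _ ≤ ε * (exp (10 * η ^ 2) - 1) * poiPMF (n * p) k := by
        gcongr
        rw [mul_comm]
        exact exp_mul_sub_one_le _ hε₀ hε₁
    _ = (exp (10 * η ^ 2) - 1) * n / N ^ 2 * poiPMF (n * p) k := by rw [hε]; ring

lemma abs_binPMF_le (n k : ℕ) (p : ℝ) : |binPMF n k p| ≤ (|p| + |1 - p|) ^ n := by
  rcases le_or_gt k n with hk | hk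
  · rw [add_pow]
    calc |binPMF n k p| = |p| ^ k * |1 - p| ^ (n - k) * n.choose k := by
          unfold binPMF; rw [abs_mul, abs_mul, abs_pow, abs_pow, Nat.abs_cast]; ring
      _ ≤ ∑ m ∈ Finset.range (n + 1), |p| ^ m * |1 - p| ^ (n - m) * n.choose m :=
          Finset.single_le_sum (f := fun m => |p| ^ m * |1 - p| ^ (n - m) * (n.choose m : ℝ))
            (fun m _ => by positivity) (Finset.mem_range.2 (by omega))
  · simp only [binPMF, Nat.choose_eq_zero_of_lt hk, Nat.cast_zero, zero_mul, abs_zero]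
    positivity

lemma poiPMF_le_one {lam : ℝ} (hlam : 0 ≤ lam) (k : ℕ) : poiPMF lam k ≤ 1 :=
  calc poiPMF lam k = exp (-lam) * (lam ^ k / k.factorial) := mul_div_assoc _ _ _
    _ ≤ exp (-lam) * exp lam := by gcongr; exact pow_div_factorial_le_exp _ hlam k
    _ = 1 := by rw [← exp_add, neg_add_cancel, exp_zero]

lemma exp_neg_mul_pow_div_factorial_le_poiPMF {a b lam : ℝ} {k K : ℕ} (ha : 0 < a)
    (hlo : a ≤ lam) (hhi : lam ≤ b) (hk : k ≤ K) :
    exp (-b) * min a 1 ^ K / K.factorial ≤ poiPMF lam k := by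
  have hmin : 0 < min a 1 := lt_min ha one_pos
  unfold poiPMF
  gcongr
  · have := ha.le.trans hlo; positivity
  · calc min a 1 ^ K ≤ min a 1 ^ k := pow_le_pow_of_le_one hmin.le (min_le_right _ _) hk
      _ ≤ lam ^ k := by gcongr; exact (min_le_left _ _).trans hlo

lemma exists_abs_binPMF_sub_poiPMF_le_of_lt {η₁ η₂ : ℝ} (h₁ : 0 < η₁) (h₂ : 0 < η₂) :
    ∃ C : ℝ, 0 < C ∧ ∀ (n N k : ℕ) (p : ℝ), 0 < N → (N : ℝ) ≤ n → (n : ℝ) ≤ N ^ 2 →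
      η₁ / N ≤ p → p ≤ η₂ / N → (k : ℝ) ≤ 2 * η₂ * n / N → (N : ℝ) < 4 * η₂ →
      |binPMF n k p - poiPMF (n * p) k| ≤ C * n / N ^ 2 * poiPMF (n * p) k := by
  set K := ⌈16 * η₂ ^ 2⌉₊
  set L := ⌈2 * η₂ * K⌉₊
  set M := (1 + 2 * η₂) ^ K
  set m := exp (-(η₂ * K)) * min η₁ 1 ^ L / L.factorial
  have hK : (0 : ℝ) < K := Nat.cast_pos.2 (Nat.ceil_pos.2 (by positivity))
  have hm : 0 < m := by have := lt_min h₁ one_pos; positivity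
  refine ⟨(M + 1) * K / m, by positivity, fun n N k p hN hNn hnN hp₁ hp₂ hk hN₂ ↦ ?_⟩
  have hN₁ : (1 : ℝ) ≤ N := by exact_mod_cast hN
  -- `N ≤ n ≤ N² < 16 η₂² ≤ K`
  have hnK : (n : ℝ) ≤ K := hnN.trans (by nlinarith [Nat.le_ceil (16 * η₂ ^ 2)])
  have hNK : (N : ℝ) ≤ K := hNn.trans hnK
  have hp₀ : 0 < p := (div_pos h₁ (by positivity)).trans_le hp₁
  have hpη : p ≤ η₂ := hp₂.trans (div_le_self h₂.le hN₁)
  have hB : |binPMF n k p| ≤ M :=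
    calc |binPMF n k p| ≤ (|p| + |1 - p|) ^ n := abs_binPMF_le n k p
      _ ≤ (1 + 2 * η₂) ^ n := by
          refine pow_le_pow_left₀ (by positivity) ?_ n
          rw [abs_of_pos hp₀]
          linarith [(abs_le.2 ⟨by linarith, by linarith⟩ : |1 - p| ≤ 1 + p)]
      _ ≤ M := pow_le_pow_right₀ (by linarith) (by exact_mod_cast hnK)
  have hlam₁ : η₁ ≤ n * p :=
    calc η₁ = N * (η₁ / N) := by field_simp
      _ ≤ n * p := by gcongr
  have hlam₂ : n * p ≤ η₂ * K := by nlinarith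
  have hkL : k ≤ L := by
    have : (k : ℝ) ≤ 2 * η₂ * K :=
      hk.trans ((div_le_self (by positivity) hN₁).trans (by gcongr))
    exact_mod_cast this.trans (Nat.le_ceil _)
  have hP := exp_neg_mul_pow_div_factorial_le_poiPMF h₁ hlam₁ hlam₂ hkL
  calc |binPMF n k p - poiPMF (n * p) k| ≤ M + 1 := by
        refine (abs_sub _ _).trans (add_le_add hB ?_)
        rw [abs_of_nonneg (poiPMF_nonneg (by positivity) k)]
        exact poiPMF_le_one (by positivity) k
    _ = (M + 1) * K / m * (1 / K) * m := by field_simp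
    _ ≤ (M + 1) * K / m * (n / N ^ 2) * poiPMF (n * p) k := by
        have hε : 1 / (K : ℝ) ≤ n / N ^ 2 := by
          rw [div_le_div_iff₀ hK (by positivity)]
          nlinarith
        gcongr
    _ = (M + 1) * K / m * n / N ^ 2 * poiPMF (n * p) k := by ring

/-- Property (c1): comparison of the binomial and Poisson probability mass functions. -/
theorem binomial_poisson_pmf_comparison (η₁ η₂ : ℝ) (h₁ : 0 < η₁) (h₁₂ : η₁ ≤ η₂) :
    ∃ C : ℝ, 0 < C ∧
      ∀ (n N k : ℕ) (p : ℝ),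
        3 ≤ n → Real.sqrt n ≤ (N : ℝ) → (N : ℝ) ≤ n →
        η₁ / N ≤ p → p ≤ η₂ / N →
        η₁ * n / (2 * N) ≤ (k : ℝ) → (k : ℝ) ≤ 2 * η₂ * n / N →
        poiPMF ((n : ℝ) * p) k * (1 - C * n / (N : ℝ) ^ 2) ≤ binPMF n k p ∧
        binPMF n k p ≤ poiPMF ((n : ℝ) * p) k * (1 + C * n / (N : ℝ) ^ 2) := by
  have h₂ := h₁.trans_le h₁₂
  obtain ⟨C, hC, hbounded⟩ := exists_abs_binPMF_sub_poiPMF_le_of_lt h₁ h₂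
  refine ⟨max (exp (10 * η₂ ^ 2) - 1) C, lt_max_of_lt_right hC, ?_⟩
  intro n N k p hn hsqrt hNn hp₁ hp₂ _ hk
  have hnN : (n : ℝ) ≤ N ^ 2 := (sqrt_le_iff.1 hsqrt).2
  have hN : 0 < N := Nat.cast_pos.1 ((sqrt_pos.2 (Nat.cast_pos.2 (by omega))).trans_le hsqrt)
  have hp₀ : 0 ≤ p := (div_pos h₁ (by positivity)).le.trans hp₁
  have hP := poiPMF_nonneg (mul_nonneg n.cast_nonneg hp₀) k
  suffices h : |binPMF n k p - poiPMF (n * p) k| ≤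
      max (exp (10 * η₂ ^ 2) - 1) C * n / N ^ 2 * poiPMF (n * p) k by
    rw [abs_sub_le_iff] at h
    constructor <;> linarith
  by_cases hsmall : p ≤ 1 / 2 ∧ 2 * k ≤ n
  · refine (abs_binPMF_sub_poiPMF_le_of_le_half (by omega) hnN hp₀ hp₂ hk hsmall.1
      hsmall.2).trans ?_
    gcongr
    exact le_max_left _ _
  · -- if `4 η₂ ≤ N` then `p ≤ η₂ / N ≤ 1/4` and `k ≤ 2 η₂ n / N ≤ n / 2`
    have hN₂ : (N : ℝ) < 4 * η₂ := by
      by_contra! hN₂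
      refine hsmall ⟨hp₂.trans ?_, ?_⟩
      · rw [div_le_iff₀ (by positivity)]; linarith
      · have : (k : ℝ) ≤ n / 2 :=
          hk.trans (by rw [div_le_div_iff₀ (by positivity) two_pos]; nlinarith)
        exact_mod_cast (by linarith : (2 * k : ℝ) ≤ n)
    refine (hbounded n N k p hN hNn hnN hp₁ hp₂ hk hN₂).trans ?_
    gcongr
    exact le_max_right _ _
end
end
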